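/- Let λ_{i1} > 0, λ_{i2} ≥ 0, μ_i > 0 for i = 1, 2. If λ₁₁ ≤ λ₂₁, μ₁ ≥ μ₂ and 2(λ₂₁ − λ₁₁) ≥ λ₁₂ − λ₂₂, then r^W_1(t) ≤ r^W_2(t) for all t > 0, i.e. τ^W_1 ≥_hr τ^W_2. -/

import Mathlib

/-- The real hyperbolic cotangent. -/
noncomputable def coth (x : ℝ) : ℝ := Real.cosh x / Real.sinh x

/-- `a_i = sqrt((λ_{i2} + μ_i)² + 4 λ_{i1} μ_i)` for the warm standby system. -/
noncomputable def aW (l1 l2 m : ℝ) : ℝ := Real.sqrt ((l2 + m) ^ 2 + 4 * l1 * m)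

/-- Hazard rate of the lifetime of the Markovian two-unit warm standby system. -/
noncomputable def rW (l1 l2 m t : ℝ) : ℝ :=
  2 * l1 * (l1 + l2) / (2 * l1 + l2 + m + aW l1 l2 m * coth (aW l1 l2 m * t / 2))

/-!
Write `c = 2λ₁ + λ₂ + μ` and `P = λ₁(λ₁ + λ₂)`, so that `(c - a)(c + a) = 4P` and
`r(t) = 2P / (c + a coth(at/2))`. The hypotheses give `P₁ ≤ P₂`, `P₁c₂ ≤ P₂c₁` and
`c₁ - a₁ ≤ c₂ - a₂`, the last one equivalent to `P₁(c₂ + a₂) ≤ P₂(c₁ + a₁)`.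
Since `y ↦ y coth y` increases and `y ↦ y (coth y - 1)` decreases on `(0, ∞)`, the claim
`P₁ D₂ ≤ P₂ D₁` for the denominators follows termwise: from `D = c + a coth(at/2)` when
`a₂ ≤ a₁`, and from `D = (c + a) + a (coth(at/2) - 1)` when `a₁ ≤ a₂`.
-/

open Real Set

lemma one_lt_coth {y : ℝ} (hy : 0 < y) : 1 < coth y := by
  have hs : 0 < sinh y := sinh_pos_iff.2 hy
  rw [coth, one_lt_div hs, ← sub_pos, cosh_sub_sinh]
  exact exp_pos _

lemma hasDerivAt_coth {y : ℝ} (hy : sinh y ≠ 0) : HasDerivAt coth (-1 / sinh y ^ 2) y :=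
  ((hasDerivAt_cosh y).div (hasDerivAt_sinh y) hy).congr_deriv
    (by rw [← sq, ← sq, cosh_sq]; ring)

lemma hasDerivAt_mul_coth {y : ℝ} (hy : sinh y ≠ 0) :
    HasDerivAt (fun y => y * coth y) ((sinh y * cosh y - y) / sinh y ^ 2) y :=
  ((hasDerivAt_id y).mul (hasDerivAt_coth hy)).congr_deriv
    (by simp only [coth, id]; field_simp; ring)

lemma hasDerivAt_mul_coth_sub_one {y : ℝ} (hy : sinh y ≠ 0) :
    HasDerivAt (fun y => y * (coth y - 1)) ((sinh y * exp (-y) - y) / sinh y ^ 2) y :=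
  ((hasDerivAt_id y).mul ((hasDerivAt_coth hy).sub_const 1)).congr_deriv
    (by rw [← cosh_sub_sinh]; simp only [coth, id]; field_simp; ring)

lemma monotoneOn_mul_coth : MonotoneOn (fun y => y * coth y) (Ioi 0) := by
  have hderiv {y : ℝ} (hy : 0 < y) := hasDerivAt_mul_coth (sinh_pos_iff.2 hy).ne'
  refine monotoneOn_of_hasDerivWithinAt_nonneg (convex_Ioi 0)
    (fun y hy => (hderiv hy).continuousAt.continuousWithinAt)
    (fun y hy => (hderiv (by simpa using hy)).hasDerivWithinAt) fun y hy => ?_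
  rw [interior_Ioi, mem_Ioi] at hy
  have : 2 * y ≤ 2 * sinh y * cosh y := sinh_two_mul y ▸ self_le_sinh_iff.2 (by linarith)
  apply div_nonneg <;> nlinarith

lemma antitoneOn_mul_coth_sub_one : AntitoneOn (fun y => y * (coth y - 1)) (Ioi 0) := by
  have hderiv {y : ℝ} (hy : 0 < y) := hasDerivAt_mul_coth_sub_one (sinh_pos_iff.2 hy).ne'
  refine antitoneOn_of_hasDerivWithinAt_nonpos (convex_Ioi 0)
    (fun y hy => (hderiv hy).continuousAt.continuousWithinAt)
    (fun y hy => (hderiv (by simpa using hy)).hasDerivWithinAt) fun y _ => ?_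
  have hexp : 2 * (sinh y * exp (-y)) = 1 - exp (-y) ^ 2 := by
    have : exp y * exp (-y) = 1 := by rw [← exp_add]; simp
    rw [sinh_eq]; linear_combination this
  have : 1 - 2 * y ≤ exp (-y) ^ 2 := by
    rw [← exp_nat_mul]; push_cast; linarith [add_one_le_exp (2 * -y)]
  exact div_nonpos_of_nonpos_of_nonneg (by linarith) (sq_nonneg _)

lemma mul_coth_mul_half_le {t a b : ℝ} (ht : 0 < t) (ha : 0 < a) (hab : a ≤ b) :
    a * coth (a * t / 2) ≤ b * coth (b * t / 2) :=
  calc a * coth (a * t / 2) = 2 / t * (a * t / 2 * coth (a * t / 2)) := by field_simp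
    _ ≤ 2 / t * (b * t / 2 * coth (b * t / 2)) := by
      have hy : 0 < a * t / 2 := by positivity
      exact mul_le_mul_of_nonneg_left
        (monotoneOn_mul_coth hy (hy.trans_le (by gcongr)) (by gcongr)) (by positivity)
    _ = b * coth (b * t / 2) := by field_simp

lemma mul_coth_mul_half_sub_one_le {t a b : ℝ} (ht : 0 < t) (ha : 0 < a) (hab : a ≤ b) :
    b * (coth (b * t / 2) - 1) ≤ a * (coth (a * t / 2) - 1) :=
  calc b * (coth (b * t / 2) - 1) = 2 / t * (b * t / 2 * (coth (b * t / 2) - 1)) := by field_simp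
    _ ≤ 2 / t * (a * t / 2 * (coth (a * t / 2) - 1)) := by
      have hy : 0 < a * t / 2 := by positivity
      exact mul_le_mul_of_nonneg_left
        (antitoneOn_mul_coth_sub_one hy (hy.trans_le (by gcongr)) (by gcongr)) (by positivity)
    _ = a * (coth (a * t / 2) - 1) := by field_simp

section aW
variable {l1 l2 m : ℝ}

lemma aW_sq (h1 : 0 ≤ l1) (hm : 0 ≤ m) : aW l1 l2 m ^ 2 = (l2 + m) ^ 2 + 4 * l1 * m :=
  sq_sqrt (by positivity)

lemma aW_pos (h1 : 0 < l1) (hm : 0 < m) : 0 < aW l1 l2 m :=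
  sqrt_pos.2 (by positivity)

lemma add_le_aW (h1 : 0 ≤ l1) (hm : 0 ≤ m) : l2 + m ≤ aW l1 l2 m :=
  le_sqrt_of_sq_le (by nlinarith)

lemma aW_le (h1 : 0 ≤ l1) (h2 : 0 ≤ l2) (hm : 0 ≤ m) : aW l1 l2 m ≤ 2 * l1 + l2 + m :=
  sqrt_le_iff.2 ⟨by positivity, by nlinarith⟩

lemma sub_aW_mul_add_aW (h1 : 0 ≤ l1) (hm : 0 ≤ m) :
    (2 * l1 + l2 + m - aW l1 l2 m) * (2 * l1 + l2 + m + aW l1 l2 m) = 4 * (l1 * (l1 + l2)) := by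
  linear_combination -aW_sq (l2 := l2) h1 hm

end aW

section Comparison
variable {l11 l12 l21 l22 m1 m2 : ℝ}

lemma warm_prod_le (h11 : 0 ≤ l11) (h22 : 0 ≤ l22) (hlam : l11 ≤ l21)
    (hcond : 2 * (l21 - l11) ≥ l12 - l22) :
    l11 * (l11 + l12) ≤ l21 * (l21 + l22) := by
  nlinarith [mul_le_mul_of_nonneg_left (by linarith : l11 + l12 ≤ l21 + l22 + (l21 - l11)) h11,
    mul_nonneg (sub_nonneg.2 hlam) (by linarith : 0 ≤ l21 + l22 - l11)]

lemma warm_prod_mul_le (h11 : 0 ≤ l11) (h12 : 0 ≤ l12) (h22 : 0 ≤ l22) (hm2 : 0 ≤ m2)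
    (hlam : l11 ≤ l21) (hmu : m1 ≥ m2) (hcond : 2 * (l21 - l11) ≥ l12 - l22) :
    l11 * (l11 + l12) * (2 * l21 + l22 + m2) ≤ l21 * (l21 + l22) * (2 * l11 + l12 + m1) := by
  have hP := warm_prod_le h11 h22 hlam hcond
  have h21 : 0 ≤ l21 := h11.trans hlam
  have hrates :
      l11 * l21 * ((l11 + l12) - (l21 + l22)) ≤ (l11 + l12) * (l21 + l22) * (l21 - l11) :=
    calc l11 * l21 * ((l11 + l12) - (l21 + l22)) ≤ l11 * l21 * (l21 - l11) :=
          mul_le_mul_of_nonneg_left (by linarith) (by positivity)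
      _ ≤ (l11 + l12) * (l21 + l22) * (l21 - l11) :=
          mul_le_mul_of_nonneg_right
            (mul_le_mul (by linarith) (by linarith) h21 (by linarith)) (sub_nonneg.2 hlam)
  nlinarith [mul_le_mul hP hmu hm2 (by positivity)]

lemma warm_sub_aW_le (h11 : 0 ≤ l11) (h12 : 0 ≤ l12) (h22 : 0 ≤ l22) (hm2 : 0 ≤ m2)
    (hlam : l11 ≤ l21) (hmu : m1 ≥ m2) (hcond : 2 * (l21 - l11) ≥ l12 - l22) :
    2 * l11 + l12 + m1 - aW l11 l12 m1 ≤ 2 * l21 + l22 + m2 - aW l21 l22 m2 := by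
  set d := 2 * l11 + l12 + m1 - aW l11 l12 m1
  have hd0 : 0 ≤ d := sub_nonneg.2 (aW_le h11 h12 (hm2.trans hmu))
  have hd1 : d ≤ 2 * l11 := by linarith [add_le_aW (l2 := l12) h11 (hm2.trans hmu)]
  have hroot : d ^ 2 = 2 * (2 * l11 + l12 + m1) * d - 4 * (l11 * (l11 + l12)) := by
    linear_combination -sub_aW_mul_add_aW (l2 := l12) h11 (hm2.trans hmu)
  suffices aW l21 l22 m2 ≤ 2 * l21 + l22 + m2 - d by linarith
  refine sqrt_le_iff.2 ⟨by linarith, ?_⟩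
  -- with `hroot` this is `d (c₂ - c₁) ≤ 2 (P₂ - P₁)`, and `0 ≤ d ≤ 2λ₁₁`
  nlinarith [mul_le_mul_of_nonneg_right hd1 (by linarith : 0 ≤ 2 * (l21 - l11) + l22 - l12),
    mul_nonneg hd0 (sub_nonneg.2 hmu), mul_nonneg h22 (sub_nonneg.2 hlam)]

lemma warm_prod_mul_add_aW_le (h11 : 0 ≤ l11) (h12 : 0 ≤ l12) (h22 : 0 ≤ l22) (hm2 : 0 ≤ m2)
    (hlam : l11 ≤ l21) (hmu : m1 ≥ m2) (hcond : 2 * (l21 - l11) ≥ l12 - l22) :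
    l11 * (l11 + l12) * (2 * l21 + l22 + m2 + aW l21 l22 m2) ≤
      l21 * (l21 + l22) * (2 * l11 + l12 + m1 + aW l11 l12 m1) := by
  have h21 : 0 ≤ l21 := h11.trans hlam
  have hB := warm_sub_aW_le h11 h12 h22 hm2 hlam hmu hcond
  have ha1 : 0 ≤ aW l11 l12 m1 := sqrt_nonneg _
  have ha2 : 0 ≤ aW l21 l22 m2 := sqrt_nonneg _
  have hsum : 0 ≤ (2 * l11 + l12 + m1 + aW l11 l12 m1) * (2 * l21 + l22 + m2 + aW l21 l22 m2) :=
    mul_nonneg (by linarith) (by linarith)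
  linear_combination (1 / 4 : ℝ) * mul_le_mul_of_nonneg_right hB hsum
    - (2 * l21 + l22 + m2 + aW l21 l22 m2) / 4 * sub_aW_mul_add_aW (l2 := l12) h11 (hm2.trans hmu)
    + (2 * l11 + l12 + m1 + aW l11 l12 m1) / 4 * sub_aW_mul_add_aW (l2 := l22) h21 hm2

end Comparison

theorem warm_hr_sufficient (l11 l12 l21 l22 m1 m2 : ℝ)
    (h11 : 0 < l11) (h12 : 0 ≤ l12) (h21 : 0 < l21) (h22 : 0 ≤ l22)
    (hm1 : 0 < m1) (hm2 : 0 < m2)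
    (hlam : l11 ≤ l21) (hmu : m1 ≥ m2)
    (hcond : 2 * (l21 - l11) ≥ l12 - l22) :
    ∀ t > (0 : ℝ), rW l11 l12 m1 t ≤ rW l21 l22 m2 t := by
  intro t ht
  set a1 := aW l11 l12 m1
  set a2 := aW l21 l22 m2
  have ha1 : 0 < a1 := aW_pos h11 hm1
  have ha2 : 0 < a2 := aW_pos h21 hm2
  have hcoth1 := one_lt_coth (by positivity : 0 < a1 * t / 2)
  have hcoth2 := one_lt_coth (by positivity : 0 < a2 * t / 2)
  have hP := warm_prod_le h11.le h22 hlam hcond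
  have hP1 : 0 ≤ l11 * (l11 + l12) := by positivity
  rw [rW, rW, div_le_div_iff₀ (by nlinarith) (by nlinarith)]
  rcases le_total a1 a2 with ha | ha
  · linarith [warm_prod_mul_add_aW_le h11.le h12 h22 hm2.le hlam hmu hcond,
      mul_le_mul hP (mul_coth_mul_half_sub_one_le ht ha1 ha) (by nlinarith) (hP1.trans hP)]
  · linarith [warm_prod_mul_le h11.le h12 h22 hm2.le hlam hmu hcond,
      mul_le_mul hP (mul_coth_mul_half_le ht ha2 ha) (by nlinarith) (hP1.trans hP)]
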